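/- For every meager set F ⊆ ℤ^ω there exists a function f : ℤ^{<ω} → ℤ^{<ω} such that F ⊆ {x ∈ ℤ^ω : for all but finitely many σ ∈ ℤ^{<ω}, the sequence σ⌢f(σ) is not an initial segment of x}. Moreover, for every function f : ℤ^{<ω} → ℤ^{<ω}, the set {x ∈ ℤ^ω : for all but finitely many σ ∈ ℤ^{<ω}, σ⌢f(σ) is not an initial segment of x} is meager. -/

import Mathlib

open Pointwise Filter

/-- The length-`n` initial segment of `x : ℕ → ℤ`, as a finite sequence. -/
def res (x : ℕ → ℤ) (n : ℕ) : List ℤ := List.ofFn (fun i : Fin n => x (i : ℕ))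

/-- A tree on `ℤ`: a set of finite integer sequences closed under initial segments. -/
def IsTree (T : Set (List ℤ)) : Prop := ∀ σ ∈ T, ∀ τ, τ <+: σ → τ ∈ T

/-- The set of infinite branches of a tree. -/
def branches (T : Set (List ℤ)) : Set (ℕ → ℤ) := {x | ∀ n, res x n ∈ T}

/-- `σ` is a splitting node of `T` (at least two immediate successors). -/
def Splits (T : Set (List ℤ)) (σ : List ℤ) : Prop :=
  ∃ i j : ℤ, i ≠ j ∧ σ ++ [i] ∈ T ∧ σ ++ [j] ∈ T

/-- `σ` is an ω-splitting node of `T` (infinitely many immediate successors). -/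
def OmegaSplits (T : Set (List ℤ)) (σ : List ℤ) : Prop :=
  {i : ℤ | σ ++ [i] ∈ T}.Infinite

/-- Perfect tree: a nonempty tree in which every node has a splitting extension. -/
def IsPerfect (T : Set (List ℤ)) : Prop :=
  IsTree T ∧ T.Nonempty ∧ ∀ σ ∈ T, ∃ τ ∈ T, σ <+: τ ∧ Splits T τ

/-- Uniformly perfect tree: perfect, and on every level either all nodes split
or none do. -/
def IsUniformlyPerfect (T : Set (List ℤ)) : Prop :=
  IsPerfect T ∧ ∀ n : ℕ,
    (∀ σ ∈ T, σ.length = n → Splits T σ) ∨ (∀ σ ∈ T, σ.length = n → ¬ Splits T σ)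

/-- Miller tree: a nonempty tree in which every node has an ω-splitting extension. -/
def IsMiller (T : Set (List ℤ)) : Prop :=
  IsTree T ∧ T.Nonempty ∧ ∀ σ ∈ T, ∃ τ ∈ T, σ <+: τ ∧ OmegaSplits T τ

/-- Laver tree: a tree with a stem `σ` such that every node is an initial
segment of the stem, or extends it and is ω-splitting. -/
def IsLaver (T : Set (List ℤ)) : Prop :=
  IsTree T ∧ ∃ σ ∈ T, ∀ τ ∈ T, τ <+: σ ∨ (σ <+: τ ∧ OmegaSplits T τ)

/-- The ω-Silver tree with parameters `A` (set of free coordinates) and `xT`. -/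
def silverTree (A : Set ℕ) (xT : ℕ → ℤ) : Set (List ℤ) :=
  {σ : List ℤ | ∀ n (h : n < σ.length), n ∉ A → σ.get ⟨n, h⟩ = xT n}

/-- ω-Silver tree: `σ ∈ T` iff `σ` agrees with `xT` outside an infinite set `A`. -/
def IsOmegaSilver (T : Set (List ℤ)) : Prop :=
  ∃ A : Set ℕ, A.Infinite ∧ ∃ xT : ℕ → ℤ, T = silverTree A xT

/-- Membership in the σ-ideal `M₋`: `F` is covered by a set of the form
`{x : ∀∞ n, x↾Iₙ ≠ x_A↾Iₙ}` where the consecutive intervals `Iₙ = [a n, a (n+1))`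
(`a` strictly monotone, `a 0 = 0`) partition `ω`. -/
def MemMminus (F : Set (ℕ → ℤ)) : Prop :=
  ∃ xA : ℕ → ℤ, ∃ a : ℕ → ℕ, a 0 = 0 ∧ StrictMono a ∧
    F ⊆ {x | ∀ᶠ n in Filter.atTop, ∃ k, a n ≤ k ∧ k < a (n + 1) ∧ x k ≠ xA k}

/-- Membership in the ideal `nwd₋` generated by the sets
`{x : ∀ n, x↾Iₙ ≠ x_A↾Iₙ}`: `F` is covered by finitely many generators. -/
def MemNwdMinus (F : Set (ℕ → ℤ)) : Prop :=
  ∃ (m : ℕ) (xA : Fin m → ℕ → ℤ) (a : Fin m → ℕ → ℕ),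
    (∀ i, a i 0 = 0 ∧ StrictMono (a i)) ∧
    F ⊆ ⋃ i, {x | ∀ n, ∃ k, a i n ≤ k ∧ k < a i (n + 1) ∧ x k ≠ xA i k}

/-- The basic clopen set `[σ]` of all extensions of `σ`. -/
def cyl (σ : List ℤ) : Set (ℕ → ℤ) := {x | res x σ.length = σ}

/-- Fake null set: for every `ε > 0` it is covered by countably many cylinders
`[σₙ]` with `Σₙ 2^{-|σₙ|} < ε`. -/
def IsFakeNull (F : Set (ℕ → ℤ)) : Prop :=
  ∀ ε : ℝ, 0 < ε → ∃ σ : ℕ → List ℤ,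
    Summable (fun n => (1 : ℝ) / 2 ^ (σ n).length) ∧
    (∑' n, (1 : ℝ) / 2 ^ (σ n).length) < ε ∧
    F ⊆ ⋃ n, cyl (σ n)

/-- `iterSum F B n` is the algebraic sum `F + B + B + ⋯ + B` (`n` copies of `B`). -/
def iterSum (F B : Set (ℕ → ℤ)) : ℕ → Set (ℕ → ℤ)
  | 0 => F
  | n + 1 => iterSum F B n + B

lemma length_res (x : ℕ → ℤ) (n : ℕ) : (res x n).length = n := by simp [res]

lemma mem_cyl {x : ℕ → ℤ} {σ : List ℤ} :
    x ∈ cyl σ ↔ ∀ i (h : i < σ.length), x i = σ.get ⟨i, h⟩ := by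
  constructor
  · intro hx i h
    have h' : i < (res x σ.length).length := by rw [length_res]; exact h
    have := List.get_of_eq hx.symm ⟨i, h⟩
    rw [this]
    simp [res]
  · intro h
    apply List.ext_get (by simp [res])
    intro i h1 h2
    simp only [res, List.get_ofFn]
    simpa using h i h2

lemma cyl_nonempty (σ : List ℤ) : (cyl σ).Nonempty := by
  refine ⟨fun i => if h : i < σ.length then σ.get ⟨i, h⟩ else 0, ?_⟩
  rw [mem_cyl]; intro i h; simp [h]

lemma cyl_mono {σ τ : List ℤ} (h : σ <+: τ) : cyl τ ⊆ cyl σ := by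
  intro x hx
  rw [mem_cyl] at hx ⊢
  intro i hi
  have := hx i (lt_of_lt_of_le hi h.length_le)
  rw [this]
  obtain ⟨t, rfl⟩ := h
  simp only [List.get_eq_getElem]
  exact List.getElem_append_left hi

lemma res_prefix (x : ℕ → ℤ) {n m : ℕ} (h : n ≤ m) : res x n <+: res x m := by
  refine ⟨List.ofFn (fun i : Fin (m - n) => x (n + (i : ℕ))), ?_⟩
  apply List.ext_getElem
  · simp [res]; omega
  · intro i h1 h2
    have hm : i < m := by simpa [res] using h2
    rcases lt_or_ge i n with hi | hi
    · rw [List.getElem_append_left (by simpa [res] using hi)]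
      simp [res]
    · rw [List.getElem_append_right (by simpa [res] using hi)]
      simp only [res, List.getElem_ofFn, length_res]
      congr 1
      simp [length_res]
      omega

lemma mem_cyl_res {x z : ℕ → ℤ} {n : ℕ} : z ∈ cyl (res x n) ↔ ∀ i < n, z i = x i := by
  rw [mem_cyl]
  constructor
  · intro h i hi
    have := h i (by simpa [length_res] using hi)
    simpa [res] using this
  · intro h i hi
    have hi' : i < n := by simpa [length_res] using hi
    simpa [res] using h i hi'

lemma isOpen_cyl (σ : List ℤ) : IsOpen (cyl σ) := by
  have : cyl σ = ⋂ i : Fin σ.length, (fun x : ℕ → ℤ => x (i : ℕ)) ⁻¹' {σ.get i} := by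
    ext x
    simp only [Set.mem_iInter, Set.mem_preimage, Set.mem_singleton_iff, mem_cyl, Fin.forall_iff]
  rw [this]
  exact isOpen_iInter_of_finite fun i =>
    (isOpen_discrete _).preimage (continuous_apply (i : ℕ))

lemma exists_cyl_subset {U : Set (ℕ → ℤ)} (hU : IsOpen U) {x : ℕ → ℤ} (hx : x ∈ U) :
    ∃ n, cyl (res x n) ⊆ U := by
  obtain ⟨v, ⟨y, n, rfl⟩, hxv, hvU⟩ :=
    (PiNat.isTopologicalBasis_cylinders (fun _ : ℕ => ℤ)).exists_subset_of_mem_open hx hU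
  refine ⟨n, fun z hz => hvU ?_⟩
  intro i hi
  rw [mem_cyl_res] at hz
  rw [hz i hi]
  exact hxv i hi

lemma exists_avoid {C : Set (ℕ → ℤ)} (hC : IsNowhereDense C) (σ : List ℤ) :
    ∃ τ, Disjoint (cyl (σ ++ τ)) C := by
  have h1 : ¬ (cyl σ ⊆ closure C) := by
    intro h
    have h2 : cyl σ ⊆ interior (closure C) := (isOpen_cyl σ).subset_interior_iff.mpr h
    rw [hC] at h2
    exact (cyl_nonempty σ).ne_empty (Set.subset_empty_iff.mp h2)
  obtain ⟨x, hxσ, hxC⟩ := Set.not_subset.mp h1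
  obtain ⟨n, hn⟩ := exists_cyl_subset isClosed_closure.isOpen_compl hxC
  have h0 : res x σ.length = σ := hxσ
  have hσ : σ <+: res x (max n σ.length) := by
    have h1 := res_prefix x (le_max_right n σ.length)
    rwa [h0] at h1
  obtain ⟨τ, hτ⟩ := hσ
  refine ⟨τ, Set.disjoint_left.mpr fun z hz hzC => ?_⟩
  rw [hτ] at hz
  have : z ∈ cyl (res x n) := cyl_mono (res_prefix x (le_max_left _ _)) hz
  exact hn this (subset_closure hzC)

lemma exists_avoid_many (C : ℕ → Set (ℕ → ℤ)) (hC : ∀ k, IsNowhereDense (C k))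
    (σ : List ℤ) (n : ℕ) : ∃ τ, ∀ k ≤ n, Disjoint (cyl (σ ++ τ)) (C k) := by
  induction n with
  | zero =>
    obtain ⟨τ, hτ⟩ := exists_avoid (hC 0) σ
    exact ⟨τ, fun k hk => Nat.le_zero.mp hk ▸ hτ⟩
  | succ n ih =>
    obtain ⟨τ, hτ⟩ := ih
    obtain ⟨ρ, hρ⟩ := exists_avoid (hC (n + 1)) (σ ++ τ)
    refine ⟨τ ++ ρ, fun k hk => ?_⟩
    rcases Nat.lt_or_ge k (n + 1) with h | h
    · refine Set.disjoint_of_subset_left ?_ (hτ k (Nat.lt_succ_iff.mp h))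
      exact cyl_mono ⟨ρ, by rw [List.append_assoc]⟩
    · have hk' : k = n + 1 := le_antisymm hk h
      subst hk'
      rwa [List.append_assoc] at hρ

/-- Every meager `F ⊆ ℤ^ω` is contained in a set of the form
`{x : for all but finitely many σ, σ⌢f(σ) ⊄ x}`, and every set of this form is meager. -/
theorem stmt1 :
    (∀ F : Set (ℕ → ℤ), IsMeagre F → ∃ f : List ℤ → List ℤ,
      F ⊆ {x | {σ : List ℤ | x ∈ cyl (σ ++ f σ)}.Finite}) ∧
    (∀ f : List ℤ → List ℤ,
      IsMeagre {x : ℕ → ℤ | {σ : List ℤ | x ∈ cyl (σ ++ f σ)}.Finite}) := by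
  constructor
  · intro F hF
    rw [isMeagre_iff_countable_union_isNowhereDense] at hF
    obtain ⟨S, hSnwd, hScount, hFsub⟩ := hF
    obtain ⟨g, hg⟩ := (hScount.insert ∅).exists_eq_range (Set.insert_nonempty _ _)
    have hnwd : ∀ k, IsNowhereDense (g k) := by
      intro k
      have : g k ∈ insert (∅ : Set (ℕ → ℤ)) S := by rw [hg]; exact Set.mem_range_self k
      rcases this with h | h
      · rw [h]; exact isNowhereDense_empty
      · exact hSnwd _ h
    choose f hf using fun σ : List ℤ => exists_avoid_many g hnwd σ σ.length
    refine ⟨f, fun x hx => ?_⟩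
    obtain ⟨C, hCS, hxC⟩ := hFsub hx
    have hCm : C ∈ insert (∅ : Set (ℕ → ℤ)) S := Set.mem_insert_of_mem _ hCS
    rw [hg] at hCm
    obtain ⟨m, rfl⟩ := hCm
    apply Set.Finite.subset ((Set.finite_Iio m).image (res x))
    intro σ hσ
    simp only [Set.mem_setOf_eq] at hσ
    have hσx : x ∈ cyl σ := cyl_mono (List.prefix_append σ (f σ)) hσ
    have hlen : σ.length < m := by
      by_contra hcon
      push_neg at hcon
      exact Set.disjoint_left.mp (hf σ m hcon) hσ hxC
    exact ⟨σ.length, hlen, hσx⟩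
  · intro f
    set U : ℕ → Set (ℕ → ℤ) :=
      fun n => ⋃ (σ : List ℤ) (_ : n ≤ σ.length), cyl (σ ++ f σ) with hU
    have hUopen : ∀ n, IsOpen (U n) := fun n =>
      isOpen_iUnion fun σ => isOpen_iUnion fun _ => isOpen_cyl _
    have hUdense : ∀ n, Dense (U n) := by
      intro n
      rw [dense_iff_inter_open]
      rintro V hV ⟨x, hx⟩
      obtain ⟨k, hk⟩ := exists_cyl_subset hV hx
      set σ := res x (max k n) with hσdef
      obtain ⟨y, hy⟩ := cyl_nonempty (σ ++ f σ)
      have hyσ : y ∈ cyl σ := cyl_mono (List.prefix_append σ (f σ)) hy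
      refine ⟨y, hk (cyl_mono (res_prefix x (le_max_left k n)) hyσ), ?_⟩
      exact Set.mem_iUnion.mpr ⟨σ, Set.mem_iUnion.mpr
        ⟨by rw [hσdef, length_res]; exact le_max_right k n, hy⟩⟩
    have hsub : {x : ℕ → ℤ | {σ : List ℤ | x ∈ cyl (σ ++ f σ)}.Finite} ⊆ ⋃ n, (U n)ᶜ := by
      intro x hx
      simp only [Set.mem_setOf_eq] at hx
      obtain ⟨N, hN⟩ : ∃ N, ∀ σ ∈ {σ : List ℤ | x ∈ cyl (σ ++ f σ)}, σ.length < N := by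
        obtain ⟨N, hN⟩ := (hx.image List.length).bddAbove
        exact ⟨N + 1, fun σ hσ => Nat.lt_succ_of_le (hN (Set.mem_image_of_mem _ hσ))⟩
      refine Set.mem_iUnion.mpr ⟨N, fun hxU => ?_⟩
      obtain ⟨σ, hσ⟩ := Set.mem_iUnion.mp hxU
      obtain ⟨hNσ, hxσ⟩ := Set.mem_iUnion.mp hσ
      exact absurd (hN σ hxσ) (not_lt.mpr hNσ)
    refine IsMeagre.mono hsub ?_
    apply isMeagre_iUnion
    intro n
    rw [isMeagre_iff_countable_union_isNowhereDense]
    refine ⟨{(U n)ᶜ}, ?_, Set.countable_singleton _, by simp⟩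
    rintro t rfl
    rw [IsNowhereDense, (hUopen n).isClosed_compl.closure_eq, interior_compl,
      (hUdense n).closure_eq, Set.compl_univ]
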